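/- Let Φ_B and Φ_C be the root systems of types B_n and C_n realized in the same vector space ℝⁿ, so that W(Φ_B) = W(Φ_C) = W as subgroups of GL(ℝⁿ). If (w, Φ_C) avoids the type A₃ patterns 3142 and 2413 and the two type B₂ patterns of length two, then (w, Φ_B) also avoids these patterns. -/

import Mathlib

open scoped Classical
open Polynomial
noncomputable section

/-- The ambient Euclidean space `ℝⁿ`. -/
abbrev Esp (n : ℕ) : Type := EuclideanSpace ℝ (Fin n)

/-- The orthogonal reflection in the hyperplane orthogonal to the vector `α`. -/
def rootReflection {n : ℕ} (α : Esp n) : Esp n ≃ₗᵢ[ℝ] Esp n :=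
  Submodule.reflection ((ℝ ∙ α)ᗮ)

/-- A finite crystallographic reduced root system in `ℝⁿ`, together with a chosen
system of positive roots.  (The root system is not required to span `ℝⁿ`, so that
subsystems of a root system are again root systems in the same ambient space.) -/
structure RootSys (n : ℕ) where
  roots : Finset (Esp n)
  pos : Finset (Esp n)
  ne_zero : ∀ α ∈ roots, α ≠ (0 : Esp n)
  neg_mem : ∀ α ∈ roots, -α ∈ roots
  reduced : ∀ α ∈ roots, ∀ t : ℝ, t • α ∈ roots → t = 1 ∨ t = -1
  reflect_mem : ∀ α ∈ roots, ∀ β ∈ roots, rootReflection α β ∈ roots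
  crystal : ∀ α ∈ roots, ∀ β ∈ roots, ∃ k : ℤ, 2 * (inner ℝ α β : ℝ) / (inner ℝ α α : ℝ) = (k : ℝ)
  pos_subset : pos ⊆ roots
  pos_iff : ∀ α ∈ roots, (α ∈ pos ↔ -α ∉ pos)
  pos_add : ∀ α ∈ pos, ∀ β ∈ pos, α + β ∈ roots → α + β ∈ pos

namespace RootSys

variable {n : ℕ}

/-- The Weyl group of a root system: the subgroup of the linear isometries of `ℝⁿ`
generated by the reflections in the roots. -/
def weylGroup (Φ : RootSys n) : Subgroup (Esp n ≃ₗᵢ[ℝ] Esp n) :=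
  Subgroup.closure {g | ∃ α ∈ Φ.roots, g = rootReflection α}

/-- The inversion set `I_Φ(w) = {α ∈ Φ⁺ : w α ∈ -Φ⁺}`. -/
def invSet (Φ : RootSys n) (w : Esp n ≃ₗᵢ[ℝ] Esp n) : Finset (Esp n) :=
  Φ.pos.filter fun α => -(w α) ∈ Φ.pos

/-- The length of a Weyl group element, `ℓ(w) = |I_Φ(w)|`. -/
def len (Φ : RootSys n) (w : Esp n ≃ₗᵢ[ℝ] Esp n) : ℕ :=
  (Φ.invSet w).card

/-- The simple roots: the indecomposable positive roots. -/
def simples (Φ : RootSys n) : Finset (Esp n) :=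
  Φ.pos.filter fun α => ¬ ∃ β ∈ Φ.pos, ∃ γ ∈ Φ.pos, α = β + γ

/-- The root poset order: `α ≤ β` iff `β - α` is a nonnegative linear combination of
the simple roots. -/
def rootLE (Φ : RootSys n) (α β : Esp n) : Prop :=
  ∃ c : Esp n → ℝ, (∀ γ, 0 ≤ c γ) ∧ β - α = ∑ γ ∈ Φ.simples, c γ • γ

/-- The positive roots `β` with `β ≥ α` in the root poset order. -/
def upperRoots (Φ : RootSys n) (α : Esp n) : Finset (Esp n) :=
  Φ.pos.filter fun β => Φ.rootLE α β

/-- `Φ'` is the parabolic root subsystem of `Φ` generated by the subset `Δ'` of the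
simple roots. -/
def IsParabolic (Φ Φ' : RootSys n) (Δ' : Finset (Esp n)) : Prop :=
  Φ'.roots = Φ.roots.filter (fun β => β ∈ Submodule.span ℝ (Δ' : Set (Esp n))) ∧
  Φ'.pos = Φ.pos.filter (fun β => β ∈ Submodule.span ℝ (Δ' : Set (Esp n)))

/-- `u` is the restriction `w|_{Φ'}` of `w` to the subsystem `Φ'` of `Φ`: the unique
element of `W(Φ')` with `I_{Φ'}(u) = I_Φ(w) ∩ (Φ')⁺`. -/
def IsRestriction (Φ' : RootSys n) (u : Esp n ≃ₗᵢ[ℝ] Esp n)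
    (Φ : RootSys n) (w : Esp n ≃ₗᵢ[ℝ] Esp n) : Prop :=
  u ∈ Φ'.weylGroup ∧ Φ'.invSet u = Φ.invSet w ∩ Φ'.pos

/-- A decomposition of `Φ` as an orthogonal direct sum of two nonempty subsystems. -/
def IsOrthDecomp (Φ Φ₁ Φ₂ : RootSys n) : Prop :=
  Φ₁.roots.Nonempty ∧ Φ₂.roots.Nonempty ∧
  (∀ α ∈ Φ₁.roots, ∀ β ∈ Φ₂.roots, (inner ℝ α β : ℝ) = 0) ∧
  Φ.roots = Φ₁.roots ∪ Φ₂.roots ∧ Φ.pos = Φ₁.pos ∪ Φ₂.pos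

/-- Irreducibility of a (nonempty) root system. -/
def IsIrreducible (Φ : RootSys n) : Prop :=
  Φ.roots.Nonempty ∧ ¬ ∃ Φ₁ Φ₂ : RootSys n, Φ.IsOrthDecomp Φ₁ Φ₂

/-- `w₀` is the longest element of `W(Φ)`: the element whose inversion set is all of `Φ⁺`. -/
def IsLongest (Φ : RootSys n) (w₀ : Esp n ≃ₗᵢ[ℝ] Esp n) : Prop :=
  w₀ ∈ Φ.weylGroup ∧ Φ.invSet w₀ = Φ.pos

end RootSys

/-- Separable elements of a Weyl group (Definition 3.1 of the paper):
`w` is separable if `Φ` has rank one; or `Φ` is reducible and the restriction of `w`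
to each part of an orthogonal decomposition is separable; or `Φ` is irreducible and
there is a pivot `α ∈ Δ` such that the restriction of `w` to the parabolic subsystem
generated by `Δ ∖ {α}` is separable and `{β ∈ Φ⁺ : β ≥ α}` is contained in or
disjoint from `I_Φ(w)`. -/
inductive Separable : {n : ℕ} → (Φ : RootSys n) → (Esp n ≃ₗᵢ[ℝ] Esp n) → Prop where
  | rank_one {n : ℕ} (Φ : RootSys n) (w : Esp n ≃ₗᵢ[ℝ] Esp n)
      (hw : w ∈ Φ.weylGroup) (hrk : ∃ α, Φ.pos = {α}) : Separable Φ w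
  | reducible {n : ℕ} (Φ Φ₁ Φ₂ : RootSys n) (w u₁ u₂ : Esp n ≃ₗᵢ[ℝ] Esp n)
      (hw : w ∈ Φ.weylGroup) (hd : Φ.IsOrthDecomp Φ₁ Φ₂)
      (h₁ : Φ₁.IsRestriction u₁ Φ w) (h₂ : Φ₂.IsRestriction u₂ Φ w)
      (s₁ : Separable Φ₁ u₁) (s₂ : Separable Φ₂ u₂) : Separable Φ w
  | pivot {n : ℕ} (Φ Φ' : RootSys n) (w u : Esp n ≃ₗᵢ[ℝ] Esp n) (α : Esp n)
      (hw : w ∈ Φ.weylGroup) (hirr : Φ.IsIrreducible) (hα : α ∈ Φ.simples)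
      (hpar : Φ.IsParabolic Φ' (Φ.simples \ {α}))
      (hres : Φ'.IsRestriction u Φ w) (hsep : Separable Φ' u)
      (hcond : Φ.upperRoots α ⊆ Φ.invSet w ∨ ∀ β ∈ Φ.upperRoots α, β ∉ Φ.invSet w) :
      Separable Φ w

/-- The rank generating polynomial `∑_{i=0}^{N} a_i qⁱ` of a sequence of coefficients. -/
def genPoly (a : ℕ → ℕ) (N : ℕ) : Polynomial ℤ :=
  ∑ i ∈ Finset.range (N + 1), Polynomial.C (a i : ℤ) * Polynomial.X ^ i

/-- A sequence is unimodal (weakly increases, then weakly decreases). -/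
def UnimodalSeq (a : ℕ → ℕ) : Prop :=
  ∃ m : ℕ, (∀ i j, i ≤ j → j ≤ m → a i ≤ a j) ∧ (∀ i j, m ≤ i → i ≤ j → a j ≤ a i)

namespace RootSys

variable {n : ℕ}

/-- The size of the `i`-th rank of the lower order ideal `Λ_w` in left weak order. -/
def lowerRankSize (Φ : RootSys n) (w : Esp n ≃ₗᵢ[ℝ] Esp n) (i : ℕ) : ℕ :=
  Set.ncard {u : Esp n ≃ₗᵢ[ℝ] Esp n |
    u ∈ Φ.weylGroup ∧ Φ.invSet u ⊆ Φ.invSet w ∧ Φ.len u = i}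

/-- The size of the `i`-th rank of the upper order ideal `V_w` in left weak order
(graded by `ℓ(u) - ℓ(w)`). -/
def upperRankSize (Φ : RootSys n) (w : Esp n ≃ₗᵢ[ℝ] Esp n) (i : ℕ) : ℕ :=
  Set.ncard {u : Esp n ≃ₗᵢ[ℝ] Esp n |
    u ∈ Φ.weylGroup ∧ Φ.invSet w ⊆ Φ.invSet u ∧ Φ.len u = Φ.len w + i}

/-- The number of elements of the Weyl group of length `i`. -/
def weylRankSize (Φ : RootSys n) (i : ℕ) : ℕ :=
  Set.ncard {u : Esp n ≃ₗᵢ[ℝ] Esp n | u ∈ Φ.weylGroup ∧ Φ.len u = i}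

end RootSys

namespace RootSys

variable {n : ℕ}

/-- `(w, Φ)` contains one of the type `A₃` patterns `3142` or `2413`: there is a
subsystem `Φ ∩ U` of type `A₃` with simple roots `a, b, c` (in this order) on which
the inversion set of `w` restricts to the inversion set of `3142` (namely
`{a, c, a+b+c}`) or of `2413` (namely `{b, a+b, b+c}`). -/
def ContainsA3Pattern (Φ : RootSys n) (w : Esp n ≃ₗᵢ[ℝ] Esp n) : Prop :=
  ∃ (U : Submodule ℝ (Esp n)) (a b c : Esp n),
    LinearIndependent ℝ ![a, b, c] ∧
    Φ.pos.filter (fun β => β ∈ U) = ({a, b, c, a + b, b + c, a + b + c} : Finset (Esp n)) ∧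
    ((Φ.invSet w).filter (fun β => β ∈ U) = ({b, a + b, b + c} : Finset (Esp n)) ∨
      (Φ.invSet w).filter (fun β => β ∈ U) = ({a, c, a + b + c} : Finset (Esp n)))

/-- `(w, Φ)` contains one of the two type `B₂` patterns whose inversion sets have
size two: there is a subsystem `Φ ∩ U` of type `B₂` on which the inversion set of
`w` restricts to a set of size two. -/
def ContainsB2Pattern (Φ : RootSys n) (w : Esp n ≃ₗᵢ[ℝ] Esp n) : Prop :=
  ∃ (U : Submodule ℝ (Esp n)) (p q : Esp n),
    LinearIndependent ℝ ![p, q] ∧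
    Φ.pos.filter (fun β => β ∈ U) = ({p, q, p + q, p + 2 • q} : Finset (Esp n)) ∧
    ((Φ.invSet w).filter (fun β => β ∈ U)).card = 2

/-- `(w, Φ)` contains one of the six type `G₂` patterns whose inversion sets have
sizes two, three, or four. -/
def ContainsG2Pattern (Φ : RootSys n) (w : Esp n ≃ₗᵢ[ℝ] Esp n) : Prop :=
  ∃ (U : Submodule ℝ (Esp n)) (p q : Esp n),
    LinearIndependent ℝ ![p, q] ∧
    Φ.pos.filter (fun β => β ∈ U) =
      ({p, q, p + q, p + 2 • q, p + 3 • q, 2 • p + 3 • q} : Finset (Esp n)) ∧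
    ((Φ.invSet w).filter (fun β => β ∈ U)).card ∈ ({2, 3, 4} : Set ℕ)

/-- A positive root is *small* if all its coefficients on the simple roots are `0` or `1`. -/
def IsSmall (Φ : RootSys n) (β : Esp n) : Prop :=
  ∃ c : Esp n → ℝ, β = ∑ γ ∈ Φ.simples, c γ • γ ∧ ∀ γ ∈ Φ.simples, c γ = 0 ∨ c γ = 1

/-- The support of `β` (written `β = ∑ c γ • γ` over the simple roots) contains the
simple root `t`. -/
def SuppContains (Φ : RootSys n) (t β : Esp n) : Prop :=
  ∃ c : Esp n → ℝ, β = ∑ γ ∈ Φ.simples, c γ • γ ∧ c t ≠ 0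

/-- The parabolic subgroup `W_J` generated by the reflections in the roots of `J`. -/
def parabolicSubgroup (J : Finset (Esp n)) : Subgroup (Esp n ≃ₗᵢ[ℝ] Esp n) :=
  Subgroup.closure {g | ∃ α ∈ J, g = rootReflection α}

/-- `w` is a minimal-length coset representative of `w W_J`, i.e. `w ∈ W^J`. -/
def IsMinCosetRep (Φ : RootSys n) (J : Finset (Esp n)) (w : Esp n ≃ₗᵢ[ℝ] Esp n) : Prop :=
  w ∈ Φ.weylGroup ∧ ∀ u ∈ parabolicSubgroup (n := n) J, Φ.len w ≤ Φ.len (w * u)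

/-- Biconvexity of a subset `A` of a set `P` of positive roots. -/
def IsBiconvexIn (P A : Finset (Esp n)) : Prop :=
  A ⊆ P ∧ (∀ a ∈ A, ∀ b ∈ A, a + b ∈ P → a + b ∈ A) ∧
    (∀ a ∈ P, ∀ b ∈ P, a ∉ A → b ∉ A → a + b ∈ P → a + b ∉ A)

/-- The number of elements of `W(Φ)` of length `ℓ(w') + i` restricting to `w'` on the
subsystem `Φ'`. -/
def fiberRankSize (Φ Φ' : RootSys n) (w' : Esp n ≃ₗᵢ[ℝ] Esp n) (i : ℕ) : ℕ :=
  Set.ncard {w : Esp n ≃ₗᵢ[ℝ] Esp n |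
    w ∈ Φ.weylGroup ∧ Φ'.IsRestriction w' Φ w ∧ Φ.len w = Φ'.len w' + i}

end RootSys

/-- Isomorphism of patterns: a linear map carrying the roots, positive roots, and the
inversion set of the one pattern bijectively onto those of the other. -/
def PatternIso {m k : ℕ} (Ψ : RootSys m) (u : Esp m ≃ₗᵢ[ℝ] Esp m)
    (Ψ' : RootSys k) (u' : Esp k ≃ₗᵢ[ℝ] Esp k) : Prop :=
  ∃ f : Esp m →ₗ[ℝ] Esp k,
    Set.InjOn f (Ψ.roots : Set (Esp m)) ∧
    Ψ.roots.image ⇑f = Ψ'.roots ∧ Ψ.pos.image ⇑f = Ψ'.pos ∧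
    (Ψ.invSet u).image ⇑f = Ψ'.invSet u'

/-- `(w, Φ)` contains a pattern isomorphic to `(u, Ψ)`: there is a subsystem
`Φ ∩ U` of `Φ` on which `w` restricts to an element whose pattern is isomorphic
to `(u, Ψ)`. -/
def ContainsPatternGen {m k : ℕ} (Φ : RootSys m) (w : Esp m ≃ₗᵢ[ℝ] Esp m)
    (Ψ : RootSys k) (u : Esp k ≃ₗᵢ[ℝ] Esp k) : Prop :=
  ∃ (U : Submodule ℝ (Esp m)) (Ψ₀ : RootSys m) (u₀ : Esp m ≃ₗᵢ[ℝ] Esp m),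
    Ψ₀.roots = Φ.roots.filter (fun β => β ∈ U) ∧
    Ψ₀.pos = Φ.pos.filter (fun β => β ∈ U) ∧
    u₀ ∈ Ψ₀.weylGroup ∧ Ψ₀.invSet u₀ = (Φ.invSet w).filter (fun β => β ∈ U) ∧
    PatternIso Ψ₀ u₀ Ψ u

/-- The `i`-th standard basis vector of `ℝⁿ`. -/
def stdB (n : ℕ) (i : Fin n) : Esp n := EuclideanSpace.single i (1 : ℝ)

/-- The `i`-th simple root of the type `Bₙ` root system: `eᵢ - eᵢ₊₁` for `i < n-1`
and `eₙ₋₁` (the last standard basis vector) for `i = n-1`. -/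
def bSimple (n : ℕ) (i : Fin n) : Esp n :=
  stdB n i - (if h : (i : ℕ) + 1 < n then stdB n ⟨(i : ℕ) + 1, h⟩ else 0)

/-- The set of positive roots of the type `Bₙ` root system. -/
def typeBPos (n : ℕ) : Set (Esp n) :=
  {v | ∃ i j : Fin n, i < j ∧ (v = stdB n i - stdB n j ∨ v = stdB n i + stdB n j)} ∪
    {v | ∃ i : Fin n, v = stdB n i}

/-- The set of positive roots of the type `Cₙ` root system. -/
def typeCPos (n : ℕ) : Set (Esp n) :=
  {v | ∃ i j : Fin n, i < j ∧ (v = stdB n i - stdB n j ∨ v = stdB n i + stdB n j)} ∪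
    {v | ∃ i : Fin n, v = 2 • stdB n i}

/-- The set of positive roots of the type `Aₙ` root system (in `ℝⁿ⁺¹`). -/
def typeAPos (n : ℕ) : Set (Esp (n + 1)) :=
  {v | ∃ i j : Fin (n + 1), i < j ∧ v = stdB (n + 1) i - stdB (n + 1) j}

/-!
Doubling the short roots, `eᵢ ↦ 2eᵢ`, and fixing the long ones is a bijection `Φ_B⁺ → Φ_C⁺`
that commutes with every isometry `w` and maps each subspace `U` into itself, so it carries
`I_{Φ_B}(w) ∩ U` onto `I_{Φ_C}(w) ∩ U`. Since squared lengths of roots of `Bₙ` are `1` or `2`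
and their inner products are integers, a `B₂` pattern `{p, q, p + q, p + 2q}` of `Φ_B` has `p`
long and `q` short, so it is carried to the `C₂` pattern with simple roots `2q, p`; an `A₃`
pattern of `Φ_B` consists of long roots and is carried to itself. Hence every forbidden pattern
of `(w, Φ_B)` gives one of `(w, Φ_C)`.
-/

open scoped RealInnerProductSpace

section

variable {n : ℕ}

theorem inner_stdB_stdB (i j : Fin n) :
    ⟪stdB n i, stdB n j⟫ = if i = j then 1 else 0 := by
  simp [stdB, EuclideanSpace.inner_single_left, PiLp.single_apply]

theorem inner_self_stdB_add_stdB {i j : Fin n} (hij : i ≠ j) :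
    ⟪stdB n i + stdB n j, stdB n i + stdB n j⟫ = 2 := by
  simp only [inner_add_left, inner_add_right, inner_stdB_stdB, if_neg hij, if_neg hij.symm]
  norm_num

theorem inner_self_stdB_sub_stdB {i j : Fin n} (hij : i ≠ j) :
    ⟪stdB n i - stdB n j, stdB n i - stdB n j⟫ = 2 := by
  simp only [inner_sub_left, inner_sub_right, inner_stdB_stdB, if_neg hij, if_neg hij.symm]
  norm_num

theorem short_or_long_of_mem_typeBPos {v : Esp n} (hv : v ∈ typeBPos n) :
    ((∃ i, v = stdB n i) ∧ ⟪v, v⟫ = 1) ∨ (v ∈ typeCPos n ∧ ⟪v, v⟫ = 2) := by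
  rcases hv with ⟨i, j, hij, rfl | rfl⟩ | ⟨i, rfl⟩
  · exact .inr ⟨.inl ⟨i, j, hij, .inl rfl⟩, inner_self_stdB_sub_stdB hij.ne⟩
  · exact .inr ⟨.inl ⟨i, j, hij, .inr rfl⟩, inner_self_stdB_add_stdB hij.ne⟩
  · exact .inl ⟨⟨i, rfl⟩, by rw [inner_stdB_stdB, if_pos rfl]⟩

theorem long_or_double_of_mem_typeCPos {v : Esp n} (hv : v ∈ typeCPos n) :
    (v ∈ typeBPos n ∧ ⟪v, v⟫ = 2) ∨ ∃ i, v = 2 • stdB n i := by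
  rcases hv with ⟨i, j, hij, rfl | rfl⟩ | ⟨i, rfl⟩
  · exact .inl ⟨.inl ⟨i, j, hij, .inl rfl⟩, inner_self_stdB_sub_stdB hij.ne⟩
  · exact .inl ⟨.inl ⟨i, j, hij, .inr rfl⟩, inner_self_stdB_add_stdB hij.ne⟩
  · exact .inr ⟨i, rfl⟩

theorem inner_self_eq_one_or_two_of_mem_typeBPos {v : Esp n} (hv : v ∈ typeBPos n) :
    ⟪v, v⟫ = 1 ∨ ⟪v, v⟫ = 2 := by
  rcases short_or_long_of_mem_typeBPos hv with ⟨-, h⟩ | ⟨-, h⟩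
  exacts [.inl h, .inr h]

theorem exists_int_inner_of_mem_typeBPos {v w : Esp n} (hv : v ∈ typeBPos n)
    (hw : w ∈ typeBPos n) : ∃ k : ℤ, ⟪v, w⟫ = k := by
  have hcoeff : ∀ u ∈ typeBPos n,
      ∃ (i j : Fin n) (s t : ℤ), u = (s : ℝ) • stdB n i + (t : ℝ) • stdB n j := by
    rintro u (⟨i, j, -, rfl | rfl⟩ | ⟨i, rfl⟩)
    · exact ⟨i, j, 1, -1, by push_cast; module⟩
    · exact ⟨i, j, 1, 1, by push_cast; module⟩
    · exact ⟨i, i, 1, 0, by push_cast; module⟩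
  obtain ⟨i, j, s, t, rfl⟩ := hcoeff v hv
  obtain ⟨k, l, s', t', rfl⟩ := hcoeff w hw
  refine ⟨s * s' * (if i = k then 1 else 0) + s * t' * (if i = l then 1 else 0)
      + t * s' * (if j = k then 1 else 0) + t * t' * (if j = l then 1 else 0), ?_⟩
  simp only [inner_add_left, inner_add_right, real_inner_smul_left, real_inner_smul_right,
    inner_stdB_stdB]
  push_cast [apply_ite (fun x : ℤ => (x : ℝ))]
  ring

-- `‖x + y‖² = ‖x‖² + ‖y‖² + 2⟪x, y⟫` with `⟪x, y⟫ ∈ ℤ` and all squared lengths in `{1, 2}`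
theorem inner_self_add_eq_one_iff {x y : Esp n} (hx : x ∈ typeBPos n) (hy : y ∈ typeBPos n)
    (hxy : x + y ∈ typeBPos n) :
    ⟪x + y, x + y⟫ = 1 ↔ ¬(⟪x, x⟫ = 1 ↔ ⟪y, y⟫ = 1) := by
  obtain ⟨X, hX⟩ := exists_int_inner_of_mem_typeBPos hx hx
  obtain ⟨Y, hY⟩ := exists_int_inner_of_mem_typeBPos hy hy
  obtain ⟨K, hK⟩ := exists_int_inner_of_mem_typeBPos hx hy
  have hx' := inner_self_eq_one_or_two_of_mem_typeBPos hx
  have hy' := inner_self_eq_one_or_two_of_mem_typeBPos hy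
  have hxy' := inner_self_eq_one_or_two_of_mem_typeBPos hxy
  rw [real_inner_add_add_self] at hxy' ⊢
  rw [hX, hY, hK] at *
  norm_cast at *
  omega

theorem add_mem_typeBPos_of_short {s t : Esp n} (hs : s ∈ typeBPos n) (ht : t ∈ typeBPos n)
    (hs1 : ⟪s, s⟫ = 1) (ht1 : ⟪t, t⟫ = 1) (hst : s ≠ t) :
    s + t ∈ typeBPos n ∧ (s - t ∈ typeBPos n ∨ t - s ∈ typeBPos n) := by
  obtain ⟨i, rfl⟩ : ∃ i, s = stdB n i := by
    rcases short_or_long_of_mem_typeBPos hs with ⟨h, -⟩ | ⟨-, h⟩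
    exacts [h, absurd (hs1.symm.trans h) (by norm_num)]
  obtain ⟨j, rfl⟩ : ∃ j, t = stdB n j := by
    rcases short_or_long_of_mem_typeBPos ht with ⟨h, -⟩ | ⟨-, h⟩
    exacts [h, absurd (ht1.symm.trans h) (by norm_num)]
  rcases lt_or_gt_of_ne (fun h => hst (congrArg (stdB n) h)) with h | h
  · exact ⟨.inl ⟨i, j, h, .inr rfl⟩, .inl (.inl ⟨i, j, h, .inl rfl⟩)⟩
  · exact ⟨.inl ⟨j, i, h, .inr (add_comm _ _)⟩, .inr (.inl ⟨j, i, h, .inl rfl⟩)⟩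

theorem typeB2_inner_eq {p q : Esp n} (hp : p ∈ typeBPos n) (hq : q ∈ typeBPos n)
    (hpq : p + q ∈ typeBPos n) (hp2q : p + 2 • q ∈ typeBPos n) :
    ⟪p, p⟫ = 2 ∧ ⟪q, q⟫ = 1 ∧ ⟪p, q⟫ = -1 := by
  obtain ⟨X, hX⟩ := exists_int_inner_of_mem_typeBPos hp hp
  obtain ⟨Y, hY⟩ := exists_int_inner_of_mem_typeBPos hq hq
  obtain ⟨K, hK⟩ := exists_int_inner_of_mem_typeBPos hp hq
  have hp' := inner_self_eq_one_or_two_of_mem_typeBPos hp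
  have hq' := inner_self_eq_one_or_two_of_mem_typeBPos hq
  have hpq' := inner_self_eq_one_or_two_of_mem_typeBPos hpq
  have hp2q' := inner_self_eq_one_or_two_of_mem_typeBPos hp2q
  have e : ⟪p + 2 • q, p + 2 • q⟫ = ⟪p, p⟫ + 4 * ⟪p, q⟫ + 4 * ⟪q, q⟫ := by
    simp only [two_nsmul, inner_add_left, inner_add_right, real_inner_comm p q]
    ring
  rw [real_inner_add_add_self] at hpq'
  rw [e] at hp2q'
  rw [hX, hY, hK] at *
  norm_cast at *
  omega

def doubleShort (v : Esp n) : Esp n :=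
  if ⟪v, v⟫ = 1 then 2 • v else v

theorem doubleShort_of_inner_self_eq_one {v : Esp n} (h : ⟪v, v⟫ = 1) :
    doubleShort v = 2 • v :=
  if_pos h

theorem doubleShort_of_inner_self_ne_one {v : Esp n} (h : ⟪v, v⟫ ≠ 1) :
    doubleShort v = v :=
  if_neg h

theorem doubleShort_mem_typeCPos_iff {u : Esp n} (hu : ⟪u, u⟫ = 1 ∨ ⟪u, u⟫ = 2) :
    doubleShort u ∈ typeCPos n ↔ u ∈ typeBPos n := by
  rcases hu with hu | hu
  · rw [doubleShort_of_inner_self_eq_one hu]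
    constructor
    · intro h
      rcases long_or_double_of_mem_typeCPos h with ⟨-, h2⟩ | ⟨i, hi⟩
      · simp only [two_nsmul, real_inner_add_add_self, hu] at h2
        norm_num at h2
      · have : u = stdB n i := by
          simpa [two_nsmul, ← two_smul ℝ] using hi
        exact .inr ⟨i, this⟩
    · intro h
      rcases short_or_long_of_mem_typeBPos h with ⟨⟨i, rfl⟩, -⟩ | ⟨-, h2⟩
      · exact .inr ⟨i, rfl⟩
      · linarith
  · rw [doubleShort_of_inner_self_ne_one (by linarith)]
    constructor
    · intro h
      rcases long_or_double_of_mem_typeCPos h with ⟨hB, -⟩ | ⟨i, rfl⟩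
      · exact hB
      · simp only [two_nsmul, real_inner_add_add_self, inner_stdB_stdB] at hu
        norm_num at hu
    · intro h
      rcases short_or_long_of_mem_typeBPos h with ⟨-, h1⟩ | ⟨hC, -⟩
      · linarith
      · exact hC

theorem exists_doubleShort_eq {v : Esp n} (hv : v ∈ typeCPos n) :
    ∃ u ∈ typeBPos n, doubleShort u = v := by
  rcases long_or_double_of_mem_typeCPos hv with ⟨hB, h2⟩ | ⟨i, rfl⟩
  · exact ⟨v, hB, doubleShort_of_inner_self_ne_one (by linarith)⟩
  · exact ⟨stdB n i, .inr ⟨i, rfl⟩,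
      doubleShort_of_inner_self_eq_one (by rw [inner_stdB_stdB, if_pos rfl])⟩

theorem injOn_doubleShort : Set.InjOn doubleShort (typeBPos n) := by
  have two_nsmul_ne : ∀ {u v : Esp n}, ⟪u, u⟫ = 1 → ⟪v, v⟫ = 2 → 2 • u ≠ v := by
    rintro u v hu hv rfl
    simp only [two_nsmul, real_inner_add_add_self, hu] at hv
    norm_num at hv
  intro u hu v hv huv
  rcases inner_self_eq_one_or_two_of_mem_typeBPos hu with hu1 | hu2 <;>
    rcases inner_self_eq_one_or_two_of_mem_typeBPos hv with hv1 | hv2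
  · rw [doubleShort_of_inner_self_eq_one hu1, doubleShort_of_inner_self_eq_one hv1] at huv
    rw [← ofNat_smul_eq_nsmul ℝ, ← ofNat_smul_eq_nsmul ℝ] at huv
    exact smul_right_injective _ two_ne_zero huv
  · rw [doubleShort_of_inner_self_eq_one hu1,
      doubleShort_of_inner_self_ne_one (by linarith)] at huv
    exact absurd huv (two_nsmul_ne hu1 hv2)
  · rw [doubleShort_of_inner_self_ne_one (by linarith),
      doubleShort_of_inner_self_eq_one hv1] at huv
    exact absurd huv.symm (two_nsmul_ne hv1 hu2)
  · rwa [doubleShort_of_inner_self_ne_one (by linarith),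
      doubleShort_of_inner_self_ne_one (by linarith)] at huv

theorem doubleShort_mem_submodule_iff (U : Submodule ℝ (Esp n)) (v : Esp n) :
    doubleShort v ∈ U ↔ v ∈ U := by
  unfold doubleShort
  split_ifs
  · rw [← ofNat_smul_eq_nsmul ℝ, Submodule.smul_mem_iff U two_ne_zero]
  · rfl

theorem doubleShort_neg_apply (w : Esp n ≃ₗᵢ[ℝ] Esp n) (v : Esp n) :
    doubleShort (-(w v)) = -(w (doubleShort v)) := by
  unfold doubleShort
  rw [inner_neg_neg, LinearIsometryEquiv.inner_map_map]
  split_ifs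
  · rw [map_nsmul, smul_neg]
  · rfl

theorem mem_typeCPos_and_iff_exists_doubleShort {P Q : Esp n → Prop}
    (hPQ : ∀ v ∈ typeBPos n, Q (doubleShort v) ↔ P v) (x : Esp n) :
    x ∈ typeCPos n ∧ Q x ↔ ∃ v, (v ∈ typeBPos n ∧ P v) ∧ doubleShort v = x := by
  constructor
  · rintro ⟨hx, hQ⟩
    obtain ⟨v, hv, rfl⟩ := exists_doubleShort_eq hx
    exact ⟨v, ⟨hv, (hPQ v hv).mp hQ⟩, rfl⟩
  · rintro ⟨v, ⟨hv, hP⟩, rfl⟩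
    exact ⟨(doubleShort_mem_typeCPos_iff (inner_self_eq_one_or_two_of_mem_typeBPos hv)).mpr hv,
      (hPQ v hv).mpr hP⟩

/-- The positive roots of `A₃` in the coordinates of its simple roots. -/
def a3Coords : Finset (Fin 3 → ℤ) :=
  {![1, 0, 0], ![0, 1, 0], ![0, 0, 1], ![1, 1, 0], ![0, 1, 1], ![1, 1, 1]}

theorem a3Coords_sub_not_mem : ∀ x ∈ a3Coords, ∀ y ∈ a3Coords, x + y ∈ a3Coords →
    x - y ∉ a3Coords ∧ y - x ∉ a3Coords := by
  decide

theorem a3Coords_ne_of_add_mem : ∀ x ∈ a3Coords, ∀ y ∈ a3Coords, x + y ∈ a3Coords →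
    x ≠ y ∧ x ≠ x + y ∧ y ≠ x + y := by
  decide

theorem a3Coords_exists_add_mem : ∀ z ∈ a3Coords, ∃ x ∈ a3Coords, ∃ y ∈ a3Coords,
    x + y ∈ a3Coords ∧ (z = x ∨ z = y ∨ z = x + y) := by
  decide

/-- In an `A₃` pattern of `Bₙ` all roots are long: two distinct short roots `eᵢ, eⱼ` of the
pattern would put both `eᵢ + eⱼ` and `±(eᵢ - eⱼ)` into it, and by parity of the number of short
roots in `{x, y, x + y}` a single short root cannot occur either. -/
theorem inner_self_ne_one_of_typeA3 {U : Submodule ℝ (Esp n)} {a b c : Esp n}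
    (hind : LinearIndependent ℝ ![a, b, c])
    (hS : ∀ v, v ∈ typeBPos n ∧ v ∈ U ↔
      v ∈ ({a, b, c, a + b, b + c, a + b + c} : Finset (Esp n))) :
    ∀ v ∈ ({a, b, c, a + b, b + c, a + b + c} : Finset (Esp n)), ⟪v, v⟫ ≠ 1 := by
  set L := Fintype.linearCombination ℤ ![a, b, c]
  have hL : Function.Injective L :=
    linearIndependent_iff_injective_fintypeLinearCombination.mp (hind.restrict_scalars' ℤ)
  have himage : ({a, b, c, a + b, b + c, a + b + c} : Finset (Esp n)) = a3Coords.image L := by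
    simp [a3Coords, L, Fintype.linearCombination_apply, Fin.sum_univ_three]
  have hmem (x : Fin 3 → ℤ) : L x ∈ typeBPos n ∧ L x ∈ U ↔ x ∈ a3Coords := by
    rw [hS, himage, hL.mem_finset_image]
  rw [himage, Finset.forall_mem_image]
  have huniq : ∀ x ∈ a3Coords, ∀ y ∈ a3Coords, ⟪L x, L x⟫ = 1 → ⟪L y, L y⟫ = 1 → x = y := by
    intro x hx y hy hx1 hy1
    by_contra hne
    obtain ⟨hxB, hxU⟩ := (hmem x).mpr hx
    obtain ⟨hyB, hyU⟩ := (hmem y).mpr hy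
    obtain ⟨hsum, hdiff⟩ := add_mem_typeBPos_of_short hxB hyB hx1 hy1 (hL.ne hne)
    have hxy : x + y ∈ a3Coords :=
      (hmem _).mp ⟨by rwa [map_add], by simpa using U.add_mem hxU hyU⟩
    rcases hdiff with h | h
    · exact (a3Coords_sub_not_mem x hx y hy hxy).1
        ((hmem _).mp ⟨by rwa [map_sub], by simpa using U.sub_mem hxU hyU⟩)
    · exact (a3Coords_sub_not_mem x hx y hy hxy).2
        ((hmem _).mp ⟨by rwa [map_sub], by simpa using U.sub_mem hyU hxU⟩)
  have hpar : ∀ x ∈ a3Coords, ∀ y ∈ a3Coords, x + y ∈ a3Coords →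
      (⟪L (x + y), L (x + y)⟫ = 1 ↔ ¬(⟪L x, L x⟫ = 1 ↔ ⟪L y, L y⟫ = 1)) := by
    intro x hx y hy hxy
    have hxyB := ((hmem _).mpr hxy).1
    rw [map_add] at hxyB ⊢
    exact inner_self_add_eq_one_iff ((hmem x).mpr hx).1 ((hmem y).mpr hy).1 hxyB
  intro z hz hz1
  obtain ⟨x, hx, y, hy, hxy, hz⟩ := a3Coords_exists_add_mem z hz
  obtain ⟨hne, hne', hne''⟩ := a3Coords_ne_of_add_mem x hx y hy hxy
  have hpar := hpar x hx y hy hxy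
  have hnone : ⟪L x, L x⟫ ≠ 1 ∧ ⟪L y, L y⟫ ≠ 1 ∧ ⟪L (x + y), L (x + y)⟫ ≠ 1 := by
    by_cases hx1 : ⟪L x, L x⟫ = 1 <;> by_cases hy1 : ⟪L y, L y⟫ = 1
    · exact absurd (huniq x hx y hy hx1 hy1) hne
    · exact absurd (huniq x hx _ hxy hx1 (hpar.mpr fun h => hy1 (h.mp hx1))) hne'
    · exact absurd (huniq y hy _ hxy hy1 (hpar.mpr fun h => hx1 (h.mpr hy1))) hne''
    · exact ⟨hx1, hy1, fun h => hpar.mp h (iff_of_false hx1 hy1)⟩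
  rcases hz with rfl | rfl | rfl
  exacts [hnone.1 hz1, hnone.2.1 hz1, hnone.2.2 hz1]

namespace RootSys

variable {ΦB ΦC : RootSys n}

theorem filter_pos_typeC_eq_image_doubleShort (hBpos : (ΦB.pos : Set (Esp n)) = typeBPos n)
    (hCpos : (ΦC.pos : Set (Esp n)) = typeCPos n) (U : Submodule ℝ (Esp n)) :
    ΦC.pos.filter (· ∈ U) = (ΦB.pos.filter (· ∈ U)).image doubleShort := by
  have hB (v : Esp n) : v ∈ ΦB.pos ↔ v ∈ typeBPos n := Set.ext_iff.mp hBpos v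
  have hC (v : Esp n) : v ∈ ΦC.pos ↔ v ∈ typeCPos n := Set.ext_iff.mp hCpos v
  ext x
  simpa only [Finset.mem_filter, Finset.mem_image, hB, hC] using
    mem_typeCPos_and_iff_exists_doubleShort (fun v _ => doubleShort_mem_submodule_iff U v) x

theorem filter_invSet_typeC_eq_image_doubleShort (hBpos : (ΦB.pos : Set (Esp n)) = typeBPos n)
    (hCpos : (ΦC.pos : Set (Esp n)) = typeCPos n) (U : Submodule ℝ (Esp n))
    (w : Esp n ≃ₗᵢ[ℝ] Esp n) :
    (ΦC.invSet w).filter (· ∈ U) = ((ΦB.invSet w).filter (· ∈ U)).image doubleShort := by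
  have hB (v : Esp n) : v ∈ ΦB.pos ↔ v ∈ typeBPos n := Set.ext_iff.mp hBpos v
  have hC (v : Esp n) : v ∈ ΦC.pos ↔ v ∈ typeCPos n := Set.ext_iff.mp hCpos v
  have hPQ : ∀ v ∈ typeBPos n, (-(w (doubleShort v)) ∈ typeCPos n ∧ doubleShort v ∈ U) ↔
      (-(w v) ∈ typeBPos n ∧ v ∈ U) := by
    intro v hv
    have hnorm : ⟪-(w v), -(w v)⟫ = ⟪v, v⟫ := by
      rw [inner_neg_neg, LinearIsometryEquiv.inner_map_map]
    rw [← doubleShort_neg_apply,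
      doubleShort_mem_typeCPos_iff (hnorm ▸ inner_self_eq_one_or_two_of_mem_typeBPos hv),
      doubleShort_mem_submodule_iff]
  ext x
  simpa only [invSet, Finset.mem_filter, Finset.mem_image, hB, hC, and_assoc] using
    mem_typeCPos_and_iff_exists_doubleShort (Q := fun x => -(w x) ∈ typeCPos n ∧ x ∈ U) hPQ x

theorem ContainsB2Pattern.toTypeC (hBpos : (ΦB.pos : Set (Esp n)) = typeBPos n)
    (hCpos : (ΦC.pos : Set (Esp n)) = typeCPos n) {w : Esp n ≃ₗᵢ[ℝ] Esp n}
    (h : ΦB.ContainsB2Pattern w) : ΦC.ContainsB2Pattern w := by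
  obtain ⟨U, p, q, hind, hfil, hcard⟩ := h
  have hmemB : ∀ v ∈ ({p, q, p + q, p + 2 • q} : Finset (Esp n)), v ∈ typeBPos n := by
    intro v hv
    rw [← hfil, Finset.mem_filter, ← Finset.mem_coe, hBpos] at hv
    exact hv.1
  obtain ⟨hpp, hqq, hpq⟩ := typeB2_inner_eq (hmemB p (by simp)) (hmemB q (by simp))
    (hmemB (p + q) (by simp)) (hmemB (p + 2 • q) (by simp))
  have hpq1 : ⟪p + q, p + q⟫ = 1 := by
    rw [real_inner_add_add_self, hpp, hqq, hpq]; norm_num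
  have hp2q2 : ⟪p + 2 • q, p + 2 • q⟫ ≠ 1 := by
    simp only [two_nsmul, inner_add_left, inner_add_right, real_inner_comm p q, hpp, hqq, hpq]
    norm_num
  refine ⟨U, 2 • q, p, ?_, ?_, ?_⟩
  · rw [LinearIndependent.pair_iff] at hind ⊢
    intro s t hst
    obtain ⟨ht, hs⟩ := hind t (2 * s) (by rw [← hst]; module)
    exact ⟨by simpa using hs, ht⟩
  · rw [filter_pos_typeC_eq_image_doubleShort hBpos hCpos, hfil]
    simp only [Finset.image_insert, Finset.image_singleton,
      doubleShort_of_inner_self_ne_one (by linarith : ⟪p, p⟫ ≠ 1),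
      doubleShort_of_inner_self_eq_one hqq, doubleShort_of_inner_self_eq_one hpq1,
      doubleShort_of_inner_self_ne_one hp2q2, smul_add]
    rw [Finset.insert_comm, add_comm p, add_comm (2 • p), Finset.pair_comm]
  · rw [filter_invSet_typeC_eq_image_doubleShort hBpos hCpos,
      Finset.card_image_of_injOn (injOn_doubleShort.mono _), hcard]
    intro v hv
    simp only [Finset.coe_filter, invSet, Finset.mem_filter] at hv
    rw [← hBpos]
    exact hv.1.1

theorem ContainsA3Pattern.toTypeC (hBpos : (ΦB.pos : Set (Esp n)) = typeBPos n)
    (hCpos : (ΦC.pos : Set (Esp n)) = typeCPos n) {w : Esp n ≃ₗᵢ[ℝ] Esp n}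
    (h : ΦB.ContainsA3Pattern w) : ΦC.ContainsA3Pattern w := by
  obtain ⟨U, a, b, c, hind, hfil, hinv⟩ := h
  have hS (v : Esp n) : v ∈ typeBPos n ∧ v ∈ U ↔
      v ∈ ({a, b, c, a + b, b + c, a + b + c} : Finset (Esp n)) := by
    rw [← hfil, Finset.mem_filter, ← Finset.mem_coe, hBpos]
  have hfix : Set.EqOn doubleShort id ({a, b, c, a + b, b + c, a + b + c} : Finset (Esp n)) :=
    fun v hv => doubleShort_of_inner_self_ne_one (inner_self_ne_one_of_typeA3 hind hS v hv)
  have hsub : (ΦB.invSet w).filter (· ∈ U) ⊆ ({a, b, c, a + b, b + c, a + b + c} : Finset _) :=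
    hfil ▸ Finset.filter_subset_filter _ (Finset.filter_subset _ _)
  refine ⟨U, a, b, c, hind, ?_, ?_⟩
  · rw [filter_pos_typeC_eq_image_doubleShort hBpos hCpos, hfil, Finset.image_congr hfix,
      Finset.image_id]
  · rwa [filter_invSet_typeC_eq_image_doubleShort hBpos hCpos,
      Finset.image_congr (hfix.mono (Finset.coe_subset.mpr hsub)), Finset.image_id]

end RootSys

end

theorem typeC_avoids_implies_typeB_avoids_general {n : ℕ} (ΦB ΦC : RootSys n)
    (hBpos : (ΦB.pos : Set (Esp n)) = typeBPos n)
    (hCpos : (ΦC.pos : Set (Esp n)) = typeCPos n)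
    (w : Esp n ≃ₗᵢ[ℝ] Esp n)
    (hA3 : ¬ ΦC.ContainsA3Pattern w) (hB2 : ¬ ΦC.ContainsB2Pattern w) :
    ¬ ΦB.ContainsA3Pattern w ∧ ¬ ΦB.ContainsB2Pattern w :=
  ⟨fun h => hA3 (h.toTypeC hBpos hCpos), fun h => hB2 (h.toTypeC hBpos hCpos)⟩

/-- **Lemma.** Let `Φ_B` and `Φ_C` be the root systems of types `Bₙ` and `Cₙ`
realized in the same space `ℝⁿ` (so that their Weyl groups coincide).  If `(w, Φ_C)`
avoids the type `A₃` patterns `3142`, `2413` and the two type `B₂` patterns of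
length two, then `(w, Φ_B)` also avoids these patterns. -/
theorem typeC_avoids_implies_typeB_avoids {n : ℕ} (ΦB ΦC : RootSys n)
    (hBpos : (ΦB.pos : Set (Esp n)) = typeBPos n)
    (hBroots : (ΦB.roots : Set (Esp n)) = (ΦB.pos : Set (Esp n)) ∪ (-(ΦB.pos : Set (Esp n))))
    (hCpos : (ΦC.pos : Set (Esp n)) = typeCPos n)
    (hCroots : (ΦC.roots : Set (Esp n)) = (ΦC.pos : Set (Esp n)) ∪ (-(ΦC.pos : Set (Esp n))))
    (w : Esp n ≃ₗᵢ[ℝ] Esp n) (hw : w ∈ ΦC.weylGroup)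
    (hA3 : ¬ ΦC.ContainsA3Pattern w) (hB2 : ¬ ΦC.ContainsB2Pattern w) :
    ¬ ΦB.ContainsA3Pattern w ∧ ¬ ΦB.ContainsB2Pattern w :=
  typeC_avoids_implies_typeB_avoids_general ΦB ΦC hBpos hCpos w hA3 hB2
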